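/- arXiv:2102.02422 — 2 statements merged into one kernel-verified Lean document; each statement's English description precedes it below -/
import Mathlib

section
/- For a symmetric positive semi-definite real d×d matrix D and p ≥ 2, the entrywise p-norm and trace satisfy Σ_{i,j} |D_{ij}|^p ≤ (tr D)^p ≤ d^{p-1} Σ_{i,j} |D_{ij}|^p. -/
open Matrix BigOperators

/-!
A 2×2 principal minor of a positive semidefinite matrix is nonnegative, so `D i j ^ 2 ≤ D i i * D j j`
and hence `∑ D i j ^ 2 ≤ (tr D) ^ 2`. Since `t ↦ t ^ (p / 2)` is superadditive on `[0, ∞)` for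
`p ≥ 2`, this gives `∑ |D i j| ^ p ≤ (tr D) ^ p`. The reverse bound is the power-mean inequality for
the (nonnegative) diagonal, whose entries are among the `|D i j|`.
-/

namespace Real

theorem sum_rpow_le_rpow_sum {ι : Type*} (s : Finset ι) {f : ι → ℝ} (hf : ∀ i ∈ s, 0 ≤ f i)
    {q : ℝ} (hq : 1 ≤ q) : ∑ i ∈ s, f i ^ q ≤ (∑ i ∈ s, f i) ^ q := by
  classical
  induction s using Finset.induction_on with
  | empty => simp [zero_rpow (by positivity : q ≠ 0)]
  | insert a s ha ih =>
    rw [Finset.sum_insert ha, Finset.sum_insert ha]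
    have hfa : 0 ≤ f a := hf a (Finset.mem_insert_self a s)
    have hfs : ∀ i ∈ s, 0 ≤ f i := fun i hi => hf i (Finset.mem_insert_of_mem hi)
    calc f a ^ q + ∑ i ∈ s, f i ^ q ≤ f a ^ q + (∑ i ∈ s, f i) ^ q := by gcongr; exact ih hfs
      _ ≤ (f a + ∑ i ∈ s, f i) ^ q := add_rpow_le_rpow_add hfa (Finset.sum_nonneg hfs) hq

end Real

namespace Matrix.PosSemidef

variable {n : Type*} {A : Matrix n n ℝ}

theorem sq_apply_le_mul_diag (hA : A.PosSemidef) (i j : n) : A i j ^ 2 ≤ A i i * A j j := by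
  have hdet := (hA.submatrix ![i, j]).det_nonneg
  have hsymm : A j i = A i j := hA.isHermitian.apply i j
  simp only [det_fin_two, submatrix_apply, Matrix.cons_val_zero, Matrix.cons_val_one] at hdet
  rw [hsymm, ← sq] at hdet
  linarith

variable [Fintype n]

theorem sum_sq_apply_le_trace_sq (hA : A.PosSemidef) : ∑ i, ∑ j, A i j ^ 2 ≤ A.trace ^ 2 :=
  calc ∑ i, ∑ j, A i j ^ 2 ≤ ∑ i, ∑ j, A i i * A j j := by
        gcongr with i _ j _; exact hA.sq_apply_le_mul_diag i j
    _ = A.trace ^ 2 := by rw [sq, trace, Finset.sum_mul_sum]; rfl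

theorem sum_abs_rpow_le_trace_rpow (hA : A.PosSemidef) {p : ℝ} (hp : 2 ≤ p) :
    ∑ i, ∑ j, |A i j| ^ p ≤ A.trace ^ p := by
  have hq : 1 ≤ p / 2 := by linarith
  have hpow : ∀ x : ℝ, |x| ^ p = (x ^ 2) ^ (p / 2) := fun x => by
    rw [← sq_abs, ← Real.rpow_natCast_mul (abs_nonneg x)]; norm_num [mul_div_cancel₀]
  simp only [hpow]
  calc ∑ i, ∑ j, (A i j ^ 2) ^ (p / 2) ≤ ∑ i, (∑ j, A i j ^ 2) ^ (p / 2) := by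
        gcongr with i _
        exact Real.sum_rpow_le_rpow_sum _ (fun j _ => sq_nonneg _) hq
    _ ≤ (∑ i, ∑ j, A i j ^ 2) ^ (p / 2) :=
        Real.sum_rpow_le_rpow_sum _ (fun i _ => Finset.sum_nonneg fun j _ => sq_nonneg _) hq
    _ ≤ (A.trace ^ 2) ^ (p / 2) := by gcongr; exact hA.sum_sq_apply_le_trace_sq
    _ = A.trace ^ p := by rw [← hpow, abs_of_nonneg hA.trace_nonneg]

theorem trace_rpow_le_card_rpow_mul_sum_abs_rpow (hA : A.PosSemidef) {p : ℝ} (hp : 1 ≤ p) :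
    A.trace ^ p ≤ (Fintype.card n : ℝ) ^ (p - 1) * ∑ i, ∑ j, |A i j| ^ p := by
  have hdiag : ∀ i, A i i ^ p ≤ ∑ j, |A i j| ^ p := fun i => by
    simpa [abs_of_nonneg hA.diag_nonneg] using
      Finset.single_le_sum (f := fun j => |A i j| ^ p) (fun j _ => by positivity) (Finset.mem_univ i)
  calc A.trace ^ p ≤ (Fintype.card n : ℝ) ^ (p - 1) * ∑ i, A i i ^ p :=
        Real.rpow_sum_le_const_mul_sum_rpow_of_nonneg _ hp fun i _ => hA.diag_nonneg
    _ ≤ (Fintype.card n : ℝ) ^ (p - 1) * ∑ i, ∑ j, |A i j| ^ p := by gcongr with i; exact hdiag i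

end Matrix.PosSemidef

/-- For a symmetric positive semi-definite real d×d matrix `D` and real `p ≥ 2`,
`Σ_{i,j} |D i j|^p ≤ (tr D)^p ≤ d^(p-1) * Σ_{i,j} |D i j|^p`. -/
theorem entrywise_norm_trace_equiv (d : ℕ) (D : Matrix (Fin d) (Fin d) ℝ)
    (hD : D.PosSemidef) (p : ℝ) (hp : 2 ≤ p) :
    (∑ i, ∑ j, |D i j| ^ p ≤ D.trace ^ p) ∧
      D.trace ^ p ≤ (d : ℝ) ^ (p - 1) * ∑ i, ∑ j, |D i j| ^ p :=
  ⟨hD.sum_abs_rpow_le_trace_rpow hp,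
    by simpa using hD.trace_rpow_le_card_rpow_mul_sum_abs_rpow (by linarith)⟩
end

section
/- Weak continuity intersection: if X and Y are Banach spaces with X reflexive and continuously embedded in Y, then L^∞(0,T;X) ∩ C_w([0,T];Y) = C_w([0,T];X), where C_w([0,T];Z) denotes functions [0,T] → Z that are weakly continuous. -/
open Set Bornology

/-!
For bounded `f`, the functionals `φ` with `t ↦ φ (f t)` continuous form a norm-closed subspace of
`X*`; it contains all `ψ ∘ j` with `ψ ∈ Y*`, and these are dense in `X*`: a functional on `X*`
vanishing on them is, by reflexivity, evaluation at some `x` with `j x = 0`, so `x = 0`.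
Conversely, a weakly continuous function on the compact set `[0,T]` is weakly bounded, hence
bounded by the uniform boundedness principle applied in the bidual.
-/

lemma Submodule.dense_of_forall_strongDual_eq_zero {V : Type*} [AddCommGroup V] [Module ℝ V]
    [TopologicalSpace V] [IsTopologicalAddGroup V] [ContinuousSMul ℝ V] [LocallyConvexSpace ℝ V]
    (S : Submodule ℝ V) (h : ∀ Φ : StrongDual ℝ V, (∀ v ∈ S, Φ v = 0) → Φ = 0) :
    Dense (S : Set V) := by
  intro v
  by_contra hv
  obtain ⟨Φ, u, hΦv, hΦS⟩ := geometric_hahn_banach_point_closed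
    S.topologicalClosure.convex S.isClosed_topologicalClosure hv
  have hu : u < 0 := by simpa using hΦS 0 S.topologicalClosure.zero_mem
  -- a linear functional bounded below on a subspace vanishes on it
  have hΦ_zero : ∀ w ∈ S, Φ w = 0 := by
    intro w hw
    by_contra hΦw
    have := hΦS (((u - 1) / Φ w) • w) (S.le_topologicalClosure (S.smul_mem _ hw))
    rw [map_smul, smul_eq_mul, div_mul_cancel₀ _ hΦw] at this
    linarith
  have : Φ v = 0 := by rw [h Φ hΦ_zero, zero_apply]
  linarith

lemma ContinuousLinearMap.denseRange_precomp_of_injective {X Y : Type*}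
    [NormedAddCommGroup X] [NormedSpace ℝ X] [NormedAddCommGroup Y] [NormedSpace ℝ Y]
    (hrefl : Function.Surjective (NormedSpace.inclusionInDoubleDual ℝ X))
    {j : X →L[ℝ] Y} (hj : Function.Injective j) :
    DenseRange (ContinuousLinearMap.precomp ℝ j : StrongDual ℝ Y →L[ℝ] StrongDual ℝ X) := by
  rw [DenseRange, ← ContinuousLinearMap.coe_coe, ← LinearMap.coe_range]
  refine Submodule.dense_of_forall_strongDual_eq_zero _ fun Φ hΦ => ?_
  obtain ⟨x, rfl⟩ := hrefl Φ
  have hjx : j x = 0 := SeparatingDual.eq_zero_of_forall_dual_eq_zero fun ψ =>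
    hΦ _ (LinearMap.mem_range_self _ ψ)
  rw [hj (hjx.trans j.map_zero.symm), map_zero]

lemma isClosed_setOf_continuousOn_apply {α 𝕜 E F : Type*} [TopologicalSpace α]
    [NontriviallyNormedField 𝕜] [NormedAddCommGroup E] [NormedSpace 𝕜 E]
    [NormedAddCommGroup F] [NormedSpace 𝕜 F] {f : α → E} {s : Set α}
    (hf : IsBounded (f '' s)) :
    IsClosed {φ : E →L[𝕜] F | ContinuousOn (fun t => φ (f t)) s} := by
  obtain ⟨R, hR, hfR⟩ := hf.exists_pos_norm_le
  refine isClosed_of_closure_subset fun φ hφ => ?_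
  refine continuousOn_of_uniform_approx_of_continuousOn fun u hu => ?_
  obtain ⟨ε, hε, hεu⟩ := Metric.mem_uniformity_dist.1 hu
  obtain ⟨ψ, hψ, hφψ⟩ := Metric.mem_closure_iff.1 hφ (ε / R) (div_pos hε hR)
  refine ⟨_, hψ, fun t ht => hεu ?_⟩
  calc dist (φ (f t)) (ψ (f t)) = ‖(φ - ψ) (f t)‖ := by
        rw [dist_eq_norm, sub_apply]
    _ ≤ ‖φ - ψ‖ * ‖f t‖ := (φ - ψ).le_opNorm _
    _ ≤ dist φ ψ * R := by
        rw [← dist_eq_norm]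
        exact mul_le_mul_of_nonneg_left (hfR _ (mem_image_of_mem f ht)) dist_nonneg
    _ < ε := by rwa [← lt_div_iff₀ hR]

lemma isBounded_of_forall_strongDual_isBounded {𝕜 E : Type*} [RCLike 𝕜]
    [NormedAddCommGroup E] [NormedSpace 𝕜 E] {s : Set E}
    (h : ∀ φ : StrongDual 𝕜 E, IsBounded (φ '' s)) : IsBounded s := by
  have hpointwise : ∀ φ : StrongDual 𝕜 E,
      ∃ C, ∀ x : s, ‖NormedSpace.inclusionInDoubleDual 𝕜 E x φ‖ ≤ C := fun φ => by
    obtain ⟨C, hC⟩ := isBounded_iff_forall_norm_le.1 (h φ)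
    exact ⟨C, fun x => hC _ (mem_image_of_mem φ x.2)⟩
  obtain ⟨C, hC⟩ := banach_steinhaus hpointwise
  refine isBounded_iff_forall_norm_le.2 ⟨C, fun x hx => ?_⟩
  rw [← (NormedSpace.inclusionInDoubleDualLi 𝕜 (E := E)).norm_map x]
  exact hC ⟨x, hx⟩

lemma IsCompact.isBounded_image_of_forall_strongDual_continuousOn {α 𝕜 E : Type*}
    [TopologicalSpace α] [RCLike 𝕜] [NormedAddCommGroup E] [NormedSpace 𝕜 E]
    {f : α → E} {s : Set α} (hs : IsCompact s)
    (h : ∀ φ : StrongDual 𝕜 E, ContinuousOn (fun t => φ (f t)) s) : IsBounded (f '' s) :=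
  isBounded_of_forall_strongDual_isBounded fun φ => by
    rw [image_image]
    exact (hs.image_of_continuousOn (h φ)).isBounded

theorem weak_continuity_intersection_general
    (X Y : Type*)
    [NormedAddCommGroup X] [NormedSpace ℝ X]
    [NormedAddCommGroup Y] [NormedSpace ℝ Y]
    (hrefl : Function.Surjective (NormedSpace.inclusionInDoubleDual ℝ X))
    (j : X →L[ℝ] Y) (hj : Function.Injective j)
    (T : ℝ) (f : ℝ → X) :
    ((∃ M : ℝ, ∀ t ∈ Icc (0 : ℝ) T, ‖f t‖ ≤ M) ∧
        ∀ ψ : Y →L[ℝ] ℝ, ContinuousOn (fun t => ψ (j (f t))) (Icc (0 : ℝ) T)) ↔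
      ∀ φ : X →L[ℝ] ℝ, ContinuousOn (fun t => φ (f t)) (Icc (0 : ℝ) T) := by
  have hbdd_iff : (∃ M : ℝ, ∀ t ∈ Icc (0 : ℝ) T, ‖f t‖ ≤ M) ↔ IsBounded (f '' Icc 0 T) := by
    simp only [isBounded_iff_forall_norm_le, forall_mem_image]
  rw [hbdd_iff]
  constructor
  · rintro ⟨hbdd, hcont⟩ φ
    have hclosed := isClosed_setOf_continuousOn_apply (𝕜 := ℝ) (F := ℝ) hbdd
    exact hclosed.closure_subset_iff.2 (range_subset_iff.2 hcont)
      (ContinuousLinearMap.denseRange_precomp_of_injective hrefl hj φ)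
  · intro h
    exact ⟨isCompact_Icc.isBounded_image_of_forall_strongDual_continuousOn h,
      fun ψ => h (ψ.comp j)⟩

/-- Weak continuity intersection: if `X` is a reflexive Banach space
continuously (and injectively) embedded in the Banach space `Y` via `j`, then a
function `f : [0,T] → X` is bounded and weakly continuous with values in `Y`
iff it is weakly continuous with values in `X`:
`L^∞(0,T;X) ∩ C_w([0,T];Y) = C_w([0,T];X)`. -/
theorem weak_continuity_intersection
    (X Y : Type*)
    [NormedAddCommGroup X] [NormedSpace ℝ X] [CompleteSpace X]
    [NormedAddCommGroup Y] [NormedSpace ℝ Y] [CompleteSpace Y]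
    (hrefl : Function.Surjective (NormedSpace.inclusionInDoubleDual ℝ X))
    (j : X →L[ℝ] Y) (hj : Function.Injective j)
    (T : ℝ) (hT : 0 < T) (f : ℝ → X) :
    ((∃ M : ℝ, ∀ t ∈ Icc (0 : ℝ) T, ‖f t‖ ≤ M) ∧
        ∀ ψ : Y →L[ℝ] ℝ, ContinuousOn (fun t => ψ (j (f t))) (Icc (0 : ℝ) T)) ↔
      ∀ φ : X →L[ℝ] ℝ, ContinuousOn (fun t => φ (f t)) (Icc (0 : ℝ) T) :=
  weak_continuity_intersection_general X Y hrefl j hj T f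
end
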